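/- Classical Stein characterization, converse direction: let μ be a Borel probability measure on ℝ with ∫|x| dμ < ∞ such that ∫_ℝ (x·φ'(x) − σ²·φ''(x)) dμ(x) = 0 for all φ ∈ C²_b(ℝ) (bounded with bounded first and second derivatives), where σ > 0. Then μ = N(0, σ²). -/

import Mathlib

/-!
Apply the Stein identity to `cos (t x)` and `sin (t x)`: together they say that
`t ∫ x e^{itx} dμ = i σ² t² ψ(t)` for the characteristic function `ψ` of `μ`. Since `μ` has a first
moment, `ψ' (t) = i ∫ x e^{itx} dμ`, so `ψ' (t) = -σ² t ψ(t)` for `t ≠ 0`, and for all `t` by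
continuity of `ψ'`. With `ψ(0) = 1` this linear ODE forces `ψ(t) = exp (-σ² t² / 2)`, the
characteristic function of `N(0, σ²)`, and characteristic functions determine measures.
-/

open MeasureTheory ProbabilityTheory Complex

def SteinIdentity (v : ℝ) (μ : Measure ℝ) : Prop :=
  ∀ φ : ℝ → ℝ, ContDiff ℝ 2 φ →
    (∃ C, ∀ x, |φ x| ≤ C) → (∃ C, ∀ x, |deriv φ x| ≤ C) →
    (∃ C, ∀ x, |deriv (deriv φ) x| ≤ C) →
    ∫ x, (x * deriv φ x - v * deriv (deriv φ) x) ∂μ = 0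

theorem eq_cexp_of_hasDerivAt {c : ℂ} {f : ℝ → ℂ} (hf : ∀ t, HasDerivAt f (-(c * t) * f t) t)
    (h₀ : f 0 = 1) (t : ℝ) : f t = cexp (-(c * t ^ 2 / 2)) := by
  have hg : ∀ s : ℝ, HasDerivAt (fun s : ℝ => f s * cexp (c * s ^ 2 / 2)) 0 s := by
    intro s
    have he : HasDerivAt (fun s : ℝ => cexp (c * s ^ 2 / 2)) (cexp (c * s ^ 2 / 2) * (c * s)) s := by
      have := ((((hasDerivAt_pow 2 (s : ℂ)).comp_ofReal).const_mul c).div_const 2).cexp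
      convert this using 1
      push_cast
      ring
    exact ((hf s).mul he).congr_deriv (by ring)
  have := is_const_of_deriv_eq_zero (fun s => (hg s).differentiableAt) (fun s => (hg s).deriv) t 0
  norm_num [h₀] at this
  rw [Complex.exp_neg]
  exact eq_inv_of_mul_eq_one_left this

section Trigonometric

variable {μ : Measure ℝ}

lemma integrable_cos_mul [IsFiniteMeasure μ] (t : ℝ) :
    Integrable (fun x => Real.cos (t * x)) μ :=
  .of_bound (by fun_prop) 1 (ae_of_all _ fun _ => Real.abs_cos_le_one _)

lemma integrable_sin_mul [IsFiniteMeasure μ] (t : ℝ) :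
    Integrable (fun x => Real.sin (t * x)) μ :=
  .of_bound (by fun_prop) 1 (ae_of_all _ fun _ => Real.abs_sin_le_one _)

lemma MeasureTheory.Integrable.mul_cos_mul {f : ℝ → ℝ} (hf : Integrable f μ) (t : ℝ) :
    Integrable (fun x => f x * Real.cos (t * x)) μ :=
  hf.mul_bdd (by fun_prop) (c := 1) (ae_of_all _ fun _ => Real.abs_cos_le_one _)

lemma MeasureTheory.Integrable.mul_sin_mul {f : ℝ → ℝ} (hf : Integrable f μ) (t : ℝ) :
    Integrable (fun x => f x * Real.sin (t * x)) μ :=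
  hf.mul_bdd (by fun_prop) (c := 1) (ae_of_all _ fun _ => Real.abs_sin_le_one _)

lemma integral_mul_cexp_mul_I {f : ℝ → ℝ} {t : ℝ}
    (hcos : Integrable (fun x => f x * Real.cos (t * x)) μ)
    (hsin : Integrable (fun x => f x * Real.sin (t * x)) μ) :
    ∫ x, f x * cexp (t * x * I) ∂μ
      = ∫ x, f x * Real.cos (t * x) ∂μ + I * ∫ x, f x * Real.sin (t * x) ∂μ := by
  have e : ∀ x : ℝ, (f x : ℂ) * cexp (t * x * I)
      = ((f x * Real.cos (t * x) : ℝ) : ℂ) + ((f x * Real.sin (t * x) : ℝ) : ℂ) * I := fun x => by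
    rw [← ofReal_mul, exp_mul_I]
    push_cast
    ring
  rw [integral_congr_ae (ae_of_all _ e), integral_add hcos.ofReal (hsin.ofReal.mul_const _),
    integral_mul_const, integral_complex_ofReal, integral_complex_ofReal, mul_comm I]

lemma charFun_eq_integral_cos_add [IsFiniteMeasure μ] (t : ℝ) :
    charFun μ t = ∫ x, Real.cos (t * x) ∂μ + I * ∫ x, Real.sin (t * x) ∂μ := by
  simpa [charFun_apply_real] using integral_mul_cexp_mul_I (μ := μ) (f := fun _ => 1)
    (by simpa using integrable_cos_mul t) (by simpa using integrable_sin_mul t)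

end Trigonometric

namespace SteinIdentity

variable {v : ℝ} {μ : Measure ℝ}

lemma integral_eq_zero_of_hasDerivAt (h : SteinIdentity v μ) {φ φ' φ'' : ℝ → ℝ}
    (hφ : ContDiff ℝ 2 φ) (hφ' : ∀ x, HasDerivAt φ (φ' x) x) (hφ'' : ∀ x, HasDerivAt φ' (φ'' x) x)
    {C₀ C₁ C₂ : ℝ} (h₀ : ∀ x, |φ x| ≤ C₀) (h₁ : ∀ x, |φ' x| ≤ C₁) (h₂ : ∀ x, |φ'' x| ≤ C₂) :
    ∫ x, (x * φ' x - v * φ'' x) ∂μ = 0 := by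
  have d₁ : deriv φ = φ' := funext fun x => (hφ' x).deriv
  have d₂ : deriv φ' = φ'' := funext fun x => (hφ'' x).deriv
  have := h φ hφ ⟨C₀, h₀⟩ ⟨C₁, d₁ ▸ h₁⟩ ⟨C₂, d₁ ▸ d₂ ▸ h₂⟩
  rwa [d₁, d₂] at this

variable [IsFiniteMeasure μ]

lemma mul_integral_mul_sin (h : SteinIdentity v μ) (hx : Integrable (fun x : ℝ => x) μ) (t : ℝ) :
    t * ∫ x, x * Real.sin (t * x) ∂μ = v * t ^ 2 * ∫ x, Real.cos (t * x) ∂μ := by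
  have hφ' : ∀ x, HasDerivAt (fun x => Real.cos (t * x)) (-(t * Real.sin (t * x))) x := fun x =>
    (((hasDerivAt_id x).const_mul t).cos).congr_deriv (by simp; ring)
  have hφ'' : ∀ x, HasDerivAt (fun x => -(t * Real.sin (t * x))) (-(t ^ 2 * Real.cos (t * x))) x :=
    fun x => ((((hasDerivAt_id x).const_mul t).sin).const_mul t).neg.congr_deriv (by simp; ring)
  have key := h.integral_eq_zero_of_hasDerivAt (by fun_prop) hφ' hφ''
    (fun x => Real.abs_cos_le_one _) (C₁ := |t|) (C₂ := t ^ 2)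
    (fun x => by
      rw [abs_neg, abs_mul]
      exact mul_le_of_le_one_right (abs_nonneg t) (Real.abs_sin_le_one _))
    (fun x => by
      rw [abs_neg, abs_mul, abs_pow, sq_abs]
      exact mul_le_of_le_one_right (sq_nonneg t) (Real.abs_cos_le_one _))
  have e : ∀ x, x * -(t * Real.sin (t * x)) - v * -(t ^ 2 * Real.cos (t * x))
      = v * t ^ 2 * Real.cos (t * x) - t * (x * Real.sin (t * x)) := fun x => by ring
  rw [integral_congr_ae (ae_of_all _ e),
    integral_sub ((integrable_cos_mul t).const_mul _) ((hx.mul_sin_mul t).const_mul _),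
    integral_const_mul, integral_const_mul] at key
  linarith

lemma mul_integral_mul_cos (h : SteinIdentity v μ) (hx : Integrable (fun x : ℝ => x) μ) (t : ℝ) :
    t * ∫ x, x * Real.cos (t * x) ∂μ = -(v * t ^ 2 * ∫ x, Real.sin (t * x) ∂μ) := by
  have hφ' : ∀ x, HasDerivAt (fun x => Real.sin (t * x)) (t * Real.cos (t * x)) x := fun x =>
    (((hasDerivAt_id x).const_mul t).sin).congr_deriv (by simp; ring)
  have hφ'' : ∀ x, HasDerivAt (fun x => t * Real.cos (t * x)) (-(t ^ 2 * Real.sin (t * x))) x :=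
    fun x => ((((hasDerivAt_id x).const_mul t).cos).const_mul t).congr_deriv (by simp; ring)
  have key := h.integral_eq_zero_of_hasDerivAt (by fun_prop) hφ' hφ''
    (fun x => Real.abs_sin_le_one _) (C₁ := |t|) (C₂ := t ^ 2)
    (fun x => by
      rw [abs_mul]
      exact mul_le_of_le_one_right (abs_nonneg t) (Real.abs_cos_le_one _))
    (fun x => by
      rw [abs_neg, abs_mul, abs_pow, sq_abs]
      exact mul_le_of_le_one_right (sq_nonneg t) (Real.abs_sin_le_one _))
  have e : ∀ x, x * (t * Real.cos (t * x)) - v * -(t ^ 2 * Real.sin (t * x))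
      = t * (x * Real.cos (t * x)) + v * t ^ 2 * Real.sin (t * x) := fun x => by ring
  rw [integral_congr_ae (ae_of_all _ e),
    integral_add ((hx.mul_cos_mul t).const_mul _) ((integrable_sin_mul t).const_mul _),
    integral_const_mul, integral_const_mul] at key
  linarith

lemma mul_integral_mul_cexp (h : SteinIdentity v μ) (hx : Integrable (fun x : ℝ => x) μ)
    (t : ℝ) : t * ∫ x, x * cexp (t * x * I) ∂μ = I * v * t ^ 2 * charFun μ t := by
  rw [integral_mul_cexp_mul_I (hx.mul_cos_mul t) (hx.mul_sin_mul t), charFun_eq_integral_cos_add,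
    mul_add, ← mul_assoc, mul_comm (t : ℂ) I, mul_assoc, ← ofReal_mul, ← ofReal_mul,
    h.mul_integral_mul_cos hx, h.mul_integral_mul_sin hx]
  push_cast
  linear_combination -(v * t ^ 2 * ∫ x, Real.sin (t * x) ∂μ : ℂ) * I_sq

lemma hasDerivAt_charFun (h : SteinIdentity v μ) (hx : Integrable (fun x : ℝ => x) μ) (t : ℝ) :
    HasDerivAt (charFun μ) (-(v * t) * charFun μ t) t := by
  have hmoment : MemLp id (1 : ℕ) μ := by
    rw [Nat.cast_one]
    exact memLp_one_iff_integrable.2 hx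
  have hψ : ContDiff ℝ 1 (charFun μ) := contDiff_charFun hmoment
  have hderiv_ne : ∀ s ∈ ({0}ᶜ : Set ℝ), deriv (charFun μ) s = -(v * s) * charFun μ s := by
    intro s hs
    have hs' : (s : ℂ) ≠ 0 := ofReal_ne_zero.2 hs
    have hd : deriv (charFun μ) s = I * ∫ x, x * cexp (s * x * I) ∂μ := by
      simpa using iteratedDeriv_charFun (t := s) hmoment
    apply mul_left_cancel₀ hs'
    rw [hd, mul_left_comm, h.mul_integral_mul_cexp hx]
    linear_combination (v * s ^ 2 * charFun μ s : ℂ) * I_sq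
  have hderiv : deriv (charFun μ) = fun s => -(v * s) * charFun μ s :=
    Continuous.ext_on (dense_compl_singleton 0) (hψ.continuous_deriv le_rfl) (by fun_prop)
      hderiv_ne
  simpa [hderiv] using (hψ.differentiable one_ne_zero t).hasDerivAt

theorem eq_gaussianReal [IsProbabilityMeasure μ] {v : NNReal} (h : SteinIdentity v μ)
    (hx : Integrable (fun x : ℝ => x) μ) : μ = gaussianReal 0 v := by
  apply Measure.ext_of_charFun
  funext t
  rw [eq_cexp_of_hasDerivAt (h.hasDerivAt_charFun hx) (by simp) t, charFun_gaussianReal]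
  congr 1
  push_cast
  ring

end SteinIdentity

theorem stmt_7_general (σ : ℝ) (μ : Measure ℝ) [IsProbabilityMeasure μ]
    (hmom : Integrable (fun x => |x|) μ)
    (hstein : ∀ φ : ℝ → ℝ, ContDiff ℝ 2 φ →
      (∃ C, ∀ x, |φ x| ≤ C) → (∃ C, ∀ x, |deriv φ x| ≤ C) →
      (∃ C, ∀ x, |deriv (deriv φ) x| ≤ C) →
      ∫ x, (x * deriv φ x - σ ^ 2 * deriv (deriv φ) x) ∂μ = 0) :
    μ = gaussianReal 0 ⟨σ ^ 2, sq_nonneg σ⟩ :=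
  SteinIdentity.eq_gaussianReal (v := ⟨σ ^ 2, sq_nonneg σ⟩) hstein
    ((integrable_norm_iff (by fun_prop)).1 hmom)

theorem stmt_7 (σ : ℝ) (hσ : 0 < σ) (μ : Measure ℝ) [IsProbabilityMeasure μ]
    (hmom : Integrable (fun x => |x|) μ)
    (hstein : ∀ φ : ℝ → ℝ, ContDiff ℝ 2 φ →
      (∃ C, ∀ x, |φ x| ≤ C) → (∃ C, ∀ x, |deriv φ x| ≤ C) →
      (∃ C, ∀ x, |deriv (deriv φ) x| ≤ C) →
      ∫ x, (x * deriv φ x - σ ^ 2 * deriv (deriv φ) x) ∂μ = 0) :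
    μ = gaussianReal 0 ⟨σ ^ 2, sq_nonneg σ⟩ :=
  stmt_7_general σ μ hmom hstein
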